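/- arXiv:1507.08890 — 2 statements merged into one kernel-verified Lean document; each statement's English description precedes it below -/
import Mathlib

section
/- Let β = (n+1)/n for an integer n ≥ 1, and suppose positive reals satisfy C(p+1)·X_p ≥ X_{(p+1)β}^{1/β} for all p ≥ 1, where X_q = ‖φ‖_{L^q}^q for a fixed bounded measurable φ ≥ 0 on a finite measure space. If additionally ‖φ‖_{L^∞} = ε > 0, then there is a constant c_1 > 0, depending only on C, β, and an upper bound for the measure of the space, such that ‖φ‖_{L^β}^β ≥ c_1. -/
open MeasureTheory

/-!
Put `q₀ = β`, `q_{k+1} = (q_k + 1) β` and `v_k = log (∫ φ ^ q_k) / q_k`, the logarithm of the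
`L^{q_k}` norm. The recursion at `p = q_k` becomes, after taking logarithms, the affine
inequality `v_{k+1} ≤ b_k + r_k v_k` with `b_k = log (C (q_k + 1)) / (q_k + 1)` and
`r_k = q_k / (q_k + 1)`. Since `q_k ≥ β ^ k`, the `b_k` are dominated by a geometric series
and the products of the `r_k` stay above a positive constant, so `v_k ≤ B + R v_0` for all `k`
as soon as `v_0 ≤ 0`. On the other hand `φ ≥ ε / 2` on a set of positive measure `m`, whence
`v_k ≥ log (ε / 2) + log m / q_k ≥ log (ε / 2) - 1` for `k` large. The level `k` depends on `φ`
through `m`, but the resulting lower bound on `v_0 = log (∫ φ ^ β) / β` does not.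
-/

open Finset Real

lemma le_sum_add_prod_mul_of_le_add_mul {v b r : ℕ → ℝ} (hb : ∀ k, 0 ≤ b k)
    (hr₀ : ∀ k, 0 ≤ r k) (hr₁ : ∀ k, r k ≤ 1) (hv : ∀ k, v (k + 1) ≤ b k + r k * v k) (k : ℕ) :
    v k ≤ ∑ j ∈ range k, b j + (∏ j ∈ range k, r j) * v 0 := by
  induction k with
  | zero => simp
  | succ k ih =>
    have hsum : 0 ≤ ∑ j ∈ range k, b j := sum_nonneg fun j _ ↦ hb j
    calc v (k + 1) ≤ b k + r k * (∑ j ∈ range k, b j + (∏ j ∈ range k, r j) * v 0) :=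
          (hv k).trans (by gcongr; exact hr₀ k)
      _ ≤ b k + ∑ j ∈ range k, b j + r k * (∏ j ∈ range k, r j) * v 0 := by
          nlinarith [hr₁ k]
      _ = _ := by rw [sum_range_succ, prod_range_succ]; ring

lemma min_le_of_le_add_mul {v b r : ℕ → ℝ} {B R c : ℝ} (hb : ∀ k, 0 ≤ b k)
    (hr₀ : ∀ k, 0 ≤ r k) (hr₁ : ∀ k, r k ≤ 1) (hv : ∀ k, v (k + 1) ≤ b k + r k * v k)
    (hB : ∀ k, ∑ j ∈ range k, b j ≤ B) (hR : ∀ k, R ≤ ∏ j ∈ range k, r j) (hR₀ : 0 < R)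
    {k : ℕ} (hk : c ≤ v k) : min 0 ((c - B) / R) ≤ v 0 := by
  rcases le_or_gt (v 0) 0 with hv₀ | hv₀
  · refine (min_le_right _ _).trans ((div_le_iff₀' hR₀).2 ?_)
    have := le_sum_add_prod_mul_of_le_add_mul hb hr₀ hr₁ hv k
    nlinarith [hB k, hR k]
  · exact (min_le_left _ _).trans hv₀.le

lemma sum_range_mul_pow_le {a x : ℝ} (ha : 0 ≤ a) (hx₀ : 0 ≤ x) (hx₁ : x < 1) (k : ℕ) :
    ∑ j ∈ range k, a * x ^ j ≤ a / (1 - x) := by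
  rw [← mul_sum, range_eq_Ico, div_eq_mul_one_div]
  gcongr
  simpa using geom_sum_Ico_le_of_lt_one (m := 0) (n := k) hx₀ hx₁

lemma log_mul_div_le {C s : ℝ} (hC : 0 < C) (hs : 0 < s) :
    log (C * s) / s ≤ 2 * C ^ (1 / 2 : ℝ) * s ^ (-(1 / 2) : ℝ) := by
  have hs' : s ^ (-(1 / 2) : ℝ) = s ^ (1 / 2 : ℝ) / s := by
    rw [show (-(1 / 2) : ℝ) = 1 / 2 - 1 by norm_num, rpow_sub_one hs.ne']
  calc log (C * s) / s ≤ (C * s) ^ (1 / 2 : ℝ) / (1 / 2) / s := by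
        gcongr
        exact log_le_rpow_div (mul_pos hC hs).le (by norm_num)
    _ = _ := by rw [hs', mul_rpow hC.le hs.le]; ring

lemma exp_neg_inv_le_div_add_one {q : ℝ} (hq : 0 < q) : exp (-q⁻¹) ≤ q / (q + 1) := by
  have h : (q + 1) / q ≤ exp q⁻¹ := by
    calc (q + 1) / q = q⁻¹ + 1 := by field_simp; ring
      _ ≤ exp q⁻¹ := add_one_le_exp _
  rw [exp_neg, ← inv_div]
  exact inv_anti₀ (by positivity) h

lemma log_div_le_of_rpow_le {β C p a b : ℝ} (hβ : 0 < β) (hC : 0 < C) (hp : 0 < p)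
    (ha : 0 < a) (hb : 0 < b) (h : b ^ (1 / β) ≤ C * (p + 1) * a) :
    log b / ((p + 1) * β) ≤ log (C * (p + 1)) / (p + 1) + p / (p + 1) * (log a / p) := by
  have hlog := log_le_log (by positivity) h
  rw [log_rpow hb, log_mul (by positivity) ha.ne'] at hlog
  calc log b / ((p + 1) * β) = 1 / β * log b / (p + 1) := by field_simp
    _ ≤ (log (C * (p + 1)) + log a) / (p + 1) := by gcongr
    _ = _ := by field_simp

noncomputable def moserExponent (β : ℝ) : ℕ → ℝ
  | 0 => β
  | k + 1 => (moserExponent β k + 1) * β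

section MoserExponent

variable {β : ℝ}

lemma pow_le_moserExponent (hβ : 1 ≤ β) (k : ℕ) : β ^ k ≤ moserExponent β k := by
  induction k with
  | zero => simpa [moserExponent] using hβ
  | succ k ih =>
    rw [pow_succ, moserExponent]
    gcongr
    linarith

lemma one_le_moserExponent (hβ : 1 ≤ β) (k : ℕ) : 1 ≤ moserExponent β k :=
  (one_le_pow₀ hβ).trans (pow_le_moserExponent hβ k)

lemma exp_le_prod_moserExponent_div (hβ : 1 < β) (k : ℕ) :
    exp (-(1 / (1 - β⁻¹))) ≤
      ∏ j ∈ range k, moserExponent β j / (moserExponent β j + 1) := by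
  have hq (j : ℕ) : 0 < moserExponent β j := by linarith [one_le_moserExponent hβ.le j]
  have hsum : ∑ j ∈ range k, (moserExponent β j)⁻¹ ≤ 1 / (1 - β⁻¹) := by
    refine le_trans (sum_le_sum fun j _ ↦ ?_) (sum_range_mul_pow_le zero_le_one
      (by positivity) (inv_lt_one_of_one_lt₀ hβ) k)
    rw [one_mul, inv_pow]
    exact inv_anti₀ (by positivity) (pow_le_moserExponent hβ.le j)
  calc exp (-(1 / (1 - β⁻¹))) ≤ exp (-∑ j ∈ range k, (moserExponent β j)⁻¹) := by
        gcongr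
    _ = ∏ j ∈ range k, exp (-(moserExponent β j)⁻¹) := by rw [← sum_neg_distrib, exp_sum]
    _ ≤ _ := prod_le_prod (fun _ _ ↦ (exp_pos _).le)
        fun j _ ↦ exp_neg_inv_le_div_add_one (hq j)

lemma log_mul_moserExponent_div_le (hβ : 1 ≤ β) {C : ℝ} (hC : 0 < C) (k : ℕ) :
    log (C * (moserExponent β k + 1)) / (moserExponent β k + 1) ≤
      2 * C ^ (1 / 2 : ℝ) * (β ^ (-(1 / 2) : ℝ)) ^ k := by
  have hpow : β ^ k ≤ moserExponent β k + 1 := by linarith [pow_le_moserExponent hβ k]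
  refine (log_mul_div_le hC (by linarith [one_le_moserExponent hβ k])).trans ?_
  rw [rpow_pow_comm (by positivity)]
  exact mul_le_mul_of_nonneg_left (rpow_le_rpow_of_nonpos (by positivity) hpow (by norm_num))
    (by positivity)

end MoserExponent

theorem exists_pos_le_of_moser_recursion {β C : ℝ} (hβ : 1 < β) (hC : 0 < C) (c : ℝ) :
    ∃ c₁ > 0, ∀ I : ℝ → ℝ, (∀ k, 0 < I (moserExponent β k)) →
      (∀ p, 1 ≤ p → I ((p + 1) * β) ^ (1 / β) ≤ C * (p + 1) * I p) →
      (∃ k, c ≤ log (I (moserExponent β k)) / moserExponent β k) → c₁ ≤ I β := by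
  set q := moserExponent β
  set ρ := β ^ (-(1 / 2) : ℝ)
  have hρ₀ : 0 ≤ ρ := by positivity
  have hρ₁ : ρ < 1 := rpow_lt_one_of_one_lt_of_neg hβ (by norm_num)
  set B := 2 * C ^ (1 / 2 : ℝ) / (1 - ρ)
  set R := exp (-(1 / (1 - β⁻¹)))
  refine ⟨exp (β * min 0 ((c - B) / R)), exp_pos _, fun I hpos hrec ⟨k, hk⟩ ↦ ?_⟩
  have hq (j : ℕ) : 1 ≤ q j := one_le_moserExponent hβ.le j
  have hv₀ : min 0 ((c - B) / R) ≤ log (I β) / β := by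
    refine min_le_of_le_add_mul (v := fun j ↦ log (I (q j)) / q j)
      (b := fun j ↦ 2 * C ^ (1 / 2 : ℝ) * ρ ^ j) (r := fun j ↦ q j / (q j + 1))
      (fun j ↦ by positivity) (fun j ↦ by have := hq j; positivity)
      (fun j ↦ (div_le_one (by linarith [hq j])).2 (by linarith)) (fun j ↦ ?_)
      (sum_range_mul_pow_le (by positivity) hρ₀ hρ₁) (exp_le_prod_moserExponent_div hβ)
      (exp_pos _) hk
    exact (log_div_le_of_rpow_le (by linarith) hC (by linarith [hq j]) (hpos j) (hpos (j + 1))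
      (hrec _ (hq j))).trans (add_le_add (log_mul_moserExponent_div_le hβ.le hC j) le_rfl)
  have hI : 0 < I β := hpos 0
  calc exp (β * min 0 ((c - B) / R)) ≤ exp (β * (log (I β) / β)) := by gcongr
    _ = I β := by rw [mul_div_cancel₀ _ (by linarith), exp_log hI]

lemma exists_log_sub_one_le_log_div_moserExponent {β : ℝ} (hβ : 1 < β) {I : ℝ → ℝ} {a m : ℝ}
    (ha : 0 < a) (hm : 0 < m) (hI : ∀ p, 0 ≤ p → a ^ p * m ≤ I p) :
    ∃ k, log a - 1 ≤ log (I (moserExponent β k)) / moserExponent β k := by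
  obtain ⟨k, hk⟩ := pow_unbounded_of_one_lt (-log m) hβ
  set q := moserExponent β k
  have hq : β ^ k ≤ q := pow_le_moserExponent hβ.le k
  have hq₀ : 0 < q := by linarith [one_le_moserExponent hβ.le k]
  refine ⟨k, ?_⟩
  have hlog : -1 ≤ log m / q := by rw [le_div_iff₀ hq₀]; linarith
  calc log a - 1 ≤ (q * log a + log m) / q := by
        rw [add_div, mul_div_cancel_left₀ _ hq₀.ne']
        linarith
    _ = log (a ^ q * m) / q := by rw [log_mul (by positivity) hm.ne', log_rpow ha]
    _ ≤ log (I q) / q := by gcongr; exact hI q hq₀.le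

section Measure

variable {X : Type*} [MeasurableSpace X] {μ : Measure X}

lemma ae_norm_le_of_eLpNorm_top_le {F : Type*} [NormedAddCommGroup F] {f : X → F} {c : ℝ}
    (hc : 0 ≤ c) (h : eLpNorm f ⊤ μ ≤ ENNReal.ofReal c) : ∀ᵐ x ∂μ, ‖f x‖ ≤ c := by
  filter_upwards [ae_le_eLpNormEssSup (f := f) (μ := μ)] with x hx
  rw [← eLpNorm_exponent_top, ← ofReal_norm] at hx
  exact (ENNReal.ofReal_le_ofReal_iff hc).1 (hx.trans h)

lemma measure_setOf_le_norm_ne_zero {F : Type*} [NormedAddCommGroup F] {f : X → F} {c : ℝ}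
    (h : ENNReal.ofReal c < eLpNorm f ⊤ μ) : μ {x | c ≤ ‖f x‖} ≠ 0 := by
  intro h₀
  have hf : ∀ᵐ x ∂μ, ‖f x‖ ≤ c := by
    filter_upwards [measure_eq_zero_iff_ae_notMem.1 h₀] with x hx
    exact (not_le.1 hx).le
  exact h.not_ge (eLpNormEssSup_le_of_ae_bound hf)

variable {φ : X → ℝ}

lemma integrable_rpow_of_ae_le [IsFiniteMeasure μ] (hφm : Measurable φ) (hφ : ∀ x, 0 ≤ φ x)
    {c : ℝ} (hc : ∀ᵐ x ∂μ, φ x ≤ c) {p : ℝ} (hp : 0 ≤ p) :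
    Integrable (fun x ↦ φ x ^ p) μ := by
  refine (integrable_const (c ^ p)).mono' (hφm.pow_const p).aestronglyMeasurable ?_
  filter_upwards [hc] with x hx
  rw [norm_of_nonneg (rpow_nonneg (hφ x) p)]
  exact rpow_le_rpow (hφ x) hx hp

lemma rpow_mul_measureReal_le_integral [IsFiniteMeasure μ] (hφ : ∀ x, 0 ≤ φ x) {c p : ℝ}
    (hc : 0 ≤ c) (hp : 0 ≤ p) (hint : Integrable (fun x ↦ φ x ^ p) μ) :
    c ^ p * μ.real {x | c ≤ φ x} ≤ ∫ x, φ x ^ p ∂μ := by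
  have hsub : {x | c ≤ φ x} ⊆ {x | c ^ p ≤ φ x ^ p} := fun x hx ↦ rpow_le_rpow hc hx hp
  calc c ^ p * μ.real {x | c ≤ φ x} ≤ c ^ p * μ.real {x | c ^ p ≤ φ x ^ p} :=
        mul_le_mul_of_nonneg_left (measureReal_mono hsub) (by positivity)
    _ ≤ ∫ x, φ x ^ p ∂μ :=
        mul_meas_ge_le_integral_of_nonneg (.of_forall fun x ↦ rpow_nonneg (hφ x) p) hint _

end Measure

theorem moser_iteration_lower_bound_general (n : ℕ) (hn : 1 ≤ n) (β : ℝ)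
    (hβ : β = ((n : ℝ) + 1) / n) (C : ℝ) (hC : 0 < C) (M : ℝ)
    (ε : ℝ) (hε : 0 < ε) :
    ∃ c₁ : ℝ, 0 < c₁ ∧
      ∀ (X : Type) (_ : MeasurableSpace X) (μ : Measure X) (_ : IsFiniteMeasure μ)
        (φ : X → ℝ), Measurable φ → (∀ x, 0 ≤ φ x) →
        μ Set.univ ≤ ENNReal.ofReal M →
        eLpNorm φ ⊤ μ = ENNReal.ofReal ε →
        (∀ p : ℝ, 1 ≤ p →
          C * (p + 1) * ∫ x, φ x ^ p ∂μ ≥ (∫ x, φ x ^ ((p + 1) * β) ∂μ) ^ (1 / β)) →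
        (∫ x, φ x ^ β ∂μ) ≥ c₁ := by
  have hβ₁ : 1 < β := by
    have : (1 : ℝ) ≤ n := by exact_mod_cast hn
    rw [hβ, lt_div_iff₀ (by positivity)]
    linarith
  obtain ⟨c₁, hc₁, hbound⟩ := exists_pos_le_of_moser_recursion hβ₁ hC (log (ε / 2) - 1)
  refine ⟨c₁, hc₁, fun X _ μ _ φ hφm hφ _ hsup hrec ↦ ?_⟩
  have hφε : ∀ᵐ x ∂μ, φ x ≤ ε := by
    filter_upwards [ae_norm_le_of_eLpNorm_top_le hε.le hsup.le] with x hx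
    rwa [norm_of_nonneg (hφ x)] at hx
  have hlarge : μ {x | ε / 2 ≤ φ x} ≠ 0 := by
    have := measure_setOf_le_norm_ne_zero (μ := μ) (f := φ) (c := ε / 2)
      (by rw [hsup, ENNReal.ofReal_lt_ofReal_iff hε]; linarith)
    simpa only [norm_of_nonneg (hφ _)] using this
  have hm : 0 < μ.real {x | ε / 2 ≤ φ x} := ENNReal.toReal_pos hlarge (measure_ne_top _ _)
  have hlow (p : ℝ) (hp : 0 ≤ p) : (ε / 2) ^ p * μ.real {x | ε / 2 ≤ φ x} ≤ ∫ x, φ x ^ p ∂μ :=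
    rpow_mul_measureReal_le_integral hφ (by positivity) hp
      (integrable_rpow_of_ae_le hφm hφ hφε hp)
  exact hbound (fun p ↦ ∫ x, φ x ^ p ∂μ)
    (fun k ↦ (by positivity : 0 < (ε / 2) ^ moserExponent β k * _).trans_le
      (hlow _ (by linarith [one_le_moserExponent hβ₁.le k])))
    hrec (exists_log_sub_one_le_log_div_moserExponent hβ₁ (by positivity) hm hlow)

theorem moser_iteration_lower_bound (n : ℕ) (hn : 1 ≤ n) (β : ℝ)
    (hβ : β = ((n : ℝ) + 1) / n) (C : ℝ) (hC : 0 < C) (M : ℝ) (hM : 0 < M)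
    (ε : ℝ) (hε : 0 < ε) :
    ∃ c₁ : ℝ, 0 < c₁ ∧
      ∀ (X : Type) (_ : MeasurableSpace X) (μ : Measure X) (_ : IsFiniteMeasure μ)
        (φ : X → ℝ), Measurable φ → (∀ x, 0 ≤ φ x) →
        μ Set.univ ≤ ENNReal.ofReal M →
        eLpNorm φ ⊤ μ = ENNReal.ofReal ε →
        (∀ p : ℝ, 1 ≤ p →
          C * (p + 1) * ∫ x, φ x ^ p ∂μ ≥ (∫ x, φ x ^ ((p + 1) * β) ∂μ) ^ (1 / β)) →
        (∫ x, φ x ^ β ∂μ) ≥ c₁ :=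
  moser_iteration_lower_bound_general n hn β hβ C hC M ε hε
end

section
/- (Gårding's inequality for elementary symmetric polynomials) For λ, μ ∈ Γ_k ⊂ ℝ^n and 1 ≤ j ≤ k, one has Σ_i μ_i S_{j-1;i}(λ) ≥ j S_j(λ)^{(j-1)/j} S_j(μ)^{1/j} > 0. -/
open Finset

/-- The `j`-th elementary symmetric polynomial of `x : Fin n → ℝ`. -/
noncomputable def esym (n j : ℕ) (x : Fin n → ℝ) : ℝ :=
  ∑ s ∈ powersetCard j (univ : Finset (Fin n)), ∏ i ∈ s, x i

/-- The Gårding `k`-positive cone `Γ_k ⊆ ℝ^n`. -/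
def GardingCone (n k : ℕ) : Set (Fin n → ℝ) :=
  {x | ∀ j, 1 ≤ j → j ≤ k → 0 < esym n j x}

/-- The `j`-th elementary symmetric polynomial in the variables omitting the `i`-th one. -/
noncomputable def esymOmit (n j : ℕ) (i : Fin n) (x : Fin n → ℝ) : ℝ :=
  ∑ s ∈ powersetCard j ((univ : Finset (Fin n)).erase i), ∏ m ∈ s, x m

open Polynomial Filter Topology

/-!
For `λ, μ ∈ Γ_j` put `P(t) = S_j(λ + t μ)`: its leading coefficient is `S_j(μ)`, its constant
term `S_j(λ)` and its linear coefficient `∑ μ_i S_{j-1;i}(λ)`. All complex roots of `P` are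
real and negative, so `P = S_j(μ) ∏ (t + g_i)` with `g_i > 0`, and the inequality is AM-GM for
the `j` numbers `∏_{k ≠ i} g_k`, whose product is `(∏ g)^(j-1)`.

The roots are located by Gårding's continuity argument: along a connected family of polynomials
with continuous coefficients and non-vanishing top coefficient, the roots cannot jump between two
disjoint open sets that together contain all of them. `S_j(z)` is, up to a factor, the value at
`0` of the `(n - j)`-th derivative of `∏ (X + z_k)`, so by Gauss-Lucas `S_j(z) ≠ 0` when every
`Im z_k > 0`. Hence for `τ > 0` the roots of `t ↦ S_j(x + iτ𝟙 + t b)` never meet the real axis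
while `b` runs along the segment from `𝟙 = (1, …, 1)` to `μ`, which stays in `Γ_j` because `Γ_j`
is a cone stable under adding `𝟙`. They start in the lower half-plane, so they stay there, and
letting `τ → 0` shows that `t ↦ S_j(x + t μ)` has only real roots. Moving `λ` from `𝟙` along the
same kind of segment, the real roots of `P` never cross `0` since `S_j(λ) > 0`, and at `λ = 𝟙`
they are negative.
-/

section RootContinuity

variable {T : Type*} [TopologicalSpace T] {p : T → ℂ[X]} {d : ℕ}

theorem norm_lt_of_isRoot {q : ℂ[X]} (hdeg : q.natDegree ≤ d) (hd : q.coeff d ≠ 0) {z : ℂ}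
    (hz : q.IsRoot z) : ‖z‖ < (∑ m ∈ range d, ‖q.coeff m‖) / ‖q.coeff d‖ + 1 := by
  have hq : q ≠ 0 := fun h => hd (by simp [h])
  have hnat : q.natDegree = d := le_antisymm hdeg (le_natDegree_of_ne_zero hd)
  have hbound := hz.norm_lt_cauchyBound hq
  have hsup : (range d).sup (‖q.coeff ·‖₊) ≤ ∑ m ∈ range d, ‖q.coeff m‖₊ :=
    Finset.sup_le fun m hm => single_le_sum (f := (‖q.coeff ·‖₊)) (fun _ _ => bot_le) hm
  rw [cauchyBound, hnat, leadingCoeff, hnat] at hbound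
  have : ‖z‖₊ < (∑ m ∈ range d, ‖q.coeff m‖₊) / ‖q.coeff d‖₊ + 1 :=
    hbound.trans_le (by gcongr)
  simpa using NNReal.coe_lt_coe.mpr this

theorem pow_card_le_norm_prod_sub {s : Multiset ℂ} {z : ℂ} {ε : ℝ} (hε : 0 ≤ ε)
    (h : ∀ r ∈ s, ε ≤ ‖z - r‖) : ε ^ Multiset.card s ≤ ‖(s.map (z - ·)).prod‖ := by
  induction s using Multiset.induction_on with
  | empty => simp
  | cons a s ih =>
    simp only [Multiset.card_cons, Multiset.map_cons, Multiset.prod_cons, norm_mul, pow_succ']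
    exact mul_le_mul (h a (by simp)) (ih fun r hr => h r (by simp [hr])) (by positivity)
      (norm_nonneg _)

theorem exists_isRoot_norm_sub_lt {q : ℂ[X]} (hdeg : q.natDegree ≤ d) {z : ℂ} {ε : ℝ}
    (hε : 0 < ε) (h : ‖q.eval z‖ < ‖q.coeff d‖ * ε ^ d) : ∃ r, q.IsRoot r ∧ ‖z - r‖ < ε := by
  by_contra! hfar
  have hd : q.coeff d ≠ 0 := by
    rintro hd
    rw [hd, norm_zero, zero_mul] at h
    exact (norm_nonneg _).not_gt h
  have hq : q ≠ 0 := fun h => hd (by simp [h])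
  have hnat : q.natDegree = d := le_antisymm hdeg (le_natDegree_of_ne_zero hd)
  have hcard : Multiset.card q.roots = d := IsAlgClosed.card_roots_eq_natDegree.trans hnat
  have heval : q.eval z = q.leadingCoeff * (q.roots.map (z - ·)).prod := by
    conv_lhs => rw [← C_leadingCoeff_mul_prod_multiset_X_sub_C (hcard.trans hnat.symm)]
    simp [eval_multiset_prod, Multiset.map_map]
  have := pow_card_le_norm_prod_sub hε.le fun r hr => hfar r ((mem_roots hq).mp hr)
  rw [heval, norm_mul, leadingCoeff, hnat] at h
  rw [hcard] at this
  exact h.not_ge (mul_le_mul_of_nonneg_left this (norm_nonneg _))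

theorem continuous_eval_of_continuous_coeff (hcont : ∀ m, Continuous fun θ => (p θ).coeff m)
    (hdeg : ∀ θ, (p θ).natDegree ≤ d) : Continuous fun q : T × ℂ => (p q.1).eval q.2 := by
  have hsum : (fun q : T × ℂ => (p q.1).eval q.2)
      = fun q => ∑ m ∈ range (d + 1), (p q.1).coeff m * q.2 ^ m :=
    funext fun q => eval_eq_sum_range' (Nat.lt_succ_of_le (hdeg q.1)) q.2
  rw [hsum]
  exact continuous_finsetSum _ fun m _ => ((hcont m).comp continuous_fst).mul (continuous_snd.pow m)

theorem eventually_exists_isRoot_mem (hcont : ∀ m, Continuous fun θ => (p θ).coeff m)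
    (hdeg : ∀ θ, (p θ).natDegree ≤ d) {θ₀ : T} (hd : (p θ₀).coeff d ≠ 0) {W : Set ℂ}
    (hW : IsOpen W) {z : ℂ} (hzW : z ∈ W) (hz : (p θ₀).IsRoot z) :
    ∀ᶠ θ in 𝓝 θ₀, ∃ w ∈ W, (p θ).IsRoot w := by
  obtain ⟨ε, hε, hball⟩ := Metric.isOpen_iff.mp hW z hzW
  have heval : Continuous fun θ => (p θ).eval z :=
    (continuous_eval_of_continuous_coeff hcont hdeg).comp (continuous_id.prodMk continuous_const)
  have hsmall : ∀ᶠ θ in 𝓝 θ₀, ‖(p θ).eval z‖ < ‖(p θ).coeff d‖ * ε ^ d :=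
    heval.norm.continuousAt.eventually_lt ((hcont d).norm.mul continuous_const).continuousAt
      (by rw [hz.eq_zero, norm_zero]; positivity)
  filter_upwards [hsmall] with θ hθ
  obtain ⟨r, hr, hzr⟩ := exists_isRoot_norm_sub_lt (hdeg θ) hε hθ
  exact ⟨r, hball (by rwa [Metric.mem_ball, dist_comm, dist_eq_norm]), hr⟩

theorem eventually_isRoot_mem (hcont : ∀ m, Continuous fun θ => (p θ).coeff m)
    (hdeg : ∀ θ, (p θ).natDegree ≤ d) {θ₀ : T} (hd : (p θ₀).coeff d ≠ 0) {U : Set ℂ}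
    (hU : IsOpen U) (h : ∀ z, (p θ₀).IsRoot z → z ∈ U) :
    ∀ᶠ θ in 𝓝 θ₀, ∀ z, (p θ).IsRoot z → z ∈ U := by
  set B : T → ℝ := fun θ => (∑ m ∈ range d, ‖(p θ).coeff m‖) / ‖(p θ).coeff d‖ + 1
  have hB : ContinuousAt B θ₀ :=
    ((continuous_finsetSum _ fun m _ => (hcont m).norm).continuousAt.div
      (hcont d).norm.continuousAt (norm_ne_zero_iff.mpr hd)).add continuousAt_const
  set K := Metric.closedBall (0 : ℂ) (B θ₀ + 1) \ U
  have hK : ∀ᶠ θ in 𝓝 θ₀, ∀ z ∈ K, (p θ).eval z ≠ 0 :=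
    ((isCompact_closedBall _ _).diff hU).eventually_forall_of_forall_eventually fun z hz =>
      (continuous_eval_of_continuous_coeff hcont hdeg).continuousAt.eventually_ne
        fun h0 => hz.2 (h z h0)
  filter_upwards [hK, (hcont d).continuousAt.eventually_ne hd,
    hB.eventually_lt continuousAt_const (lt_add_one _)] with θ hθK hθd hθB z hz
  by_contra hzU
  refine hθK z ⟨?_, hzU⟩ hz
  exact mem_closedBall_zero_iff.mpr ((norm_lt_of_isRoot (hdeg θ) hθd hz).trans hθB).le

theorem IsPreconnected.isRoot_mem_of_isRoot_mem {s : Set T} (hs : IsPreconnected s)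
    (hcont : ∀ m, Continuous fun θ => (p θ).coeff m) (hdeg : ∀ θ, (p θ).natDegree ≤ d)
    (hd : ∀ θ ∈ s, (p θ).coeff d ≠ 0) {U V : Set ℂ} (hU : IsOpen U) (hV : IsOpen V)
    (hUV : Disjoint U V) (hroots : ∀ θ ∈ s, ∀ z, (p θ).IsRoot z → z ∈ U ∪ V) {a b : T}
    (ha : a ∈ s) (hb : b ∈ s) (hstart : ∀ z, (p a).IsRoot z → z ∈ U) :
    ∀ z, (p b).IsRoot z → z ∈ U := by
  set u := {θ | ∀ᶠ θ' in 𝓝 θ, ∀ z, (p θ').IsRoot z → z ∈ U}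
  set v := {θ | ∀ᶠ θ' in 𝓝 θ, ∃ z ∈ V, (p θ').IsRoot z}
  have hsuv : s ⊆ u ∪ v := by
    intro θ hθ
    by_cases hθU : ∀ z, (p θ).IsRoot z → z ∈ U
    · exact Or.inl (eventually_isRoot_mem hcont hdeg (hd θ hθ) hU hθU)
    · push Not at hθU
      obtain ⟨z, hz, hzU⟩ := hθU
      exact Or.inr (eventually_exists_isRoot_mem hcont hdeg (hd θ hθ) hV
        ((hroots θ hθ z hz).resolve_left hzU) hz)
  by_contra hbU
  have hbv : b ∈ v := (hsuv hb).resolve_left fun hbu => hbU hbu.self_of_nhds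
  obtain ⟨θ, -, hθu, hθv⟩ := hs u v isOpen_setOfPred_eventually_nhds isOpen_setOfPred_eventually_nhds
    hsuv ⟨a, ha, eventually_isRoot_mem hcont hdeg (hd a ha) hU hstart⟩ ⟨b, hb, hbv⟩
  obtain ⟨z, hzV, hz⟩ := hθv.self_of_nhds
  exact hUV.ne_of_mem (hθu.self_of_nhds z hz) hzV rfl

theorem IsPreconnected.neg_of_isRoot {s : Set T} (hs : IsPreconnected s)
    (hcont : ∀ m, Continuous fun θ => (p θ).coeff m) (hdeg : ∀ θ, (p θ).natDegree ≤ d)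
    (hd : ∀ θ ∈ s, (p θ).coeff d ≠ 0) {f : ℂ → ℝ} (hf : Continuous f)
    (hroots : ∀ θ ∈ s, ∀ z, (p θ).IsRoot z → f z ≠ 0) {a b : T} (ha : a ∈ s) (hb : b ∈ s)
    (hstart : ∀ z, (p a).IsRoot z → f z < 0) : ∀ z, (p b).IsRoot z → f z < 0 :=
  hs.isRoot_mem_of_isRoot_mem hcont hdeg hd (isOpen_lt hf continuous_const)
    (isOpen_lt continuous_const hf) (Set.disjoint_left.mpr fun z (h₁ : f z < 0) (h₂ : 0 < f z) => lt_asymm h₁ h₂)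
    (fun θ hθ z hz => (hroots θ hθ z hz).lt_or_gt) ha hb hstart

end RootContinuity

theorem continuous_coeff_prod {ι T R : Type*} [CommSemiring R] [TopologicalSpace R]
    [IsTopologicalSemiring R] [TopologicalSpace T] (s : Finset ι) {f : ι → T → R[X]}
    (hf : ∀ i ∈ s, ∀ m, Continuous fun θ => (f i θ).coeff m) (m : ℕ) :
    Continuous fun θ => (∏ i ∈ s, f i θ).coeff m := by
  classical
  induction s using Finset.induction_on generalizing m with
  | empty =>
    simp only [prod_empty]
    exact continuous_const
  | insert i s hi ih =>
    simp only [prod_insert hi, coeff_mul]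
    exact continuous_finsetSum _ fun x _ => (hf i (mem_insert_self i s) x.1).mul
      (ih (fun i' hi' => hf i' (mem_insert_of_mem hi')) x.2)

theorem isRoot_iterate_derivative_mem {K : Set ℂ} (hK : Convex ℝ K) :
    ∀ {m : ℕ} {P : ℂ[X]}, m < P.natDegree → P.rootSet ℂ ⊆ K →
      ∀ z, (derivative^[m] P).IsRoot z → z ∈ K
  | 0, _, hm, hP => fun z hz =>
    hP (mem_rootSet.mpr ⟨ne_zero_of_natDegree_gt hm, by simpa using hz⟩)
  | m + 1, P, hm, hP => by
    rw [Function.iterate_succ_apply]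
    refine isRoot_iterate_derivative_mem hK (by rw [natDegree_derivative]; omega) ?_
    exact (rootSet_derivative_subset_convexHull_rootSet
      (natDegree_pos_iff_degree_pos.mp (by omega))).trans (convexHull_min hP hK)

theorem esymm_ne_zero_of_forall_im_pos {n j : ℕ} (hjn : j ≤ n) {z : Fin n → ℂ}
    (hz : ∀ k, 0 < (z k).im) : (univ.val.map z).esymm j ≠ 0 := by
  rcases Nat.eq_zero_or_pos j with rfl | hj
  · rw [esymm_map_val]
    simp
  set Q := ∏ k, (X + C (z k))
  have hQ : Q.natDegree = n := by
    rw [natDegree_prod_of_monic _ _ fun k _ => monic_X_add_C _]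
    simp
  have hQroots : Q.rootSet ℂ ⊆ {w | w.im < 0} := by
    intro w hw
    rw [mem_rootSet, coe_aeval_eq_eval, eval_prod, prod_eq_zero_iff] at hw
    obtain ⟨k, -, hk⟩ := hw.2
    rw [eval_add, eval_X, eval_C, add_eq_zero_iff_eq_neg] at hk
    simpa [hk] using hz k
  have hroots := isRoot_iterate_derivative_mem (convex_halfSpace_lt Complex.imLm.isLinear 0)
    (m := n - j) (by omega) hQroots 0
  intro h0
  refine (lt_irrefl (0 : ℝ)) (hroots ?_)
  rw [IsRoot, ← coeff_zero_eq_eval_zero, coeff_iterate_derivative, zero_add,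
    Finset.prod_X_add_C_coeff _ _ (by simp), card_univ, Fintype.card_fin,
    show n - (n - j) = j by omega, ← esymm_map_val, h0, smul_zero]

theorem coeff_one_prod_X_add_C {ι R : Type*} [CommRing R] [DecidableEq ι] (s : Finset ι)
    (g : ι → R) :
    (∏ i ∈ s, (X + C (g i))).coeff 1 = ∑ i ∈ s, ∏ k ∈ s.erase i, g k := by
  have h := coeff_derivative (∏ i ∈ s, (X + C (g i))) 0
  rw [zero_add, Nat.cast_zero, zero_add, mul_one, coeff_zero_eq_eval_zero] at h
  simp [← h, derivative_prod_finset, eval_finsetSum, eval_prod]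

theorem card_mul_prod_rpow_le_sum_prod_erase {ι : Type*} [Fintype ι] [DecidableEq ι] {g : ι → ℝ}
    (hg : ∀ i, 0 < g i) :
    Fintype.card ι * (∏ i, g i) ^ (((Fintype.card ι : ℝ) - 1) / Fintype.card ι)
      ≤ ∑ i, ∏ k ∈ univ.erase i, g k := by
  set d := Fintype.card ι
  rcases Nat.eq_zero_or_pos d with hd | hd
  · simp [d, Fintype.card_eq_zero_iff.mp hd]
  set G := ∏ i, g i
  have hG : 0 < G := prod_pos fun i _ => hg i
  have hq : ∀ i, ∏ k ∈ univ.erase i, g k = G / g i := fun i =>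
    eq_div_of_mul_eq (hg i).ne' (prod_erase_mul univ g (mem_univ i))
  have hprod : ∏ i, (G / g i) = G ^ (d - 1) := by
    rw [prod_div_distrib, prod_const, card_univ]
    change G ^ d / G = _
    rw [← pow_sub_one_mul hd.ne', mul_div_assoc, div_self hG.ne', mul_one]
  have hamgm := Real.geom_mean_le_arith_mean univ (fun _ => 1) (fun i => G / g i)
    (fun _ _ => zero_le_one) (by simpa using hd) fun i _ => (div_pos hG (hg i)).le
  simp only [Real.rpow_one, sum_const, card_univ, nsmul_eq_mul, mul_one, one_mul] at hamgm
  rw [hprod, ← Real.rpow_natCast, ← Real.rpow_mul hG.le, Nat.cast_sub hd, Nat.cast_one,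
    le_div_iff₀ (by positivity)] at hamgm
  simp_rw [hq]
  calc (d : ℝ) * G ^ (((d : ℝ) - 1) / d) = G ^ (((d : ℝ) - 1) * (d : ℝ)⁻¹) * d := by
        rw [div_eq_mul_inv, mul_comm]
    _ ≤ _ := hamgm

theorem exists_eq_C_mul_prod_X_add_C {P : ℝ[X]}
    (hP : ∀ z : ℂ, aeval z P = 0 → z.im = 0 ∧ z.re < 0) :
    ∃ (d : ℕ) (g : Fin d → ℝ), (∀ i, 0 < g i) ∧ P = C P.leadingCoeff * ∏ i, (X + C (g i)) := by
  set Q := P.map (algebraMap ℝ ℂ)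
  set w := Q.roots.toList.get
  have hw : Q.roots = univ.val.map w := by
    rw [Fin.univ_val_map, List.ofFn_get, Multiset.coe_toList]
  have hroots : ∀ i, (w i).im = 0 ∧ (w i).re < 0 := fun i => hP _ <| by
    have hi : w i ∈ Q.roots := hw ▸ Multiset.mem_map_of_mem _ (mem_univ_val i)
    rw [← eval_map_algebraMap]
    exact (mem_roots'.mp hi).2
  refine ⟨_, fun i => -(w i).re, fun i => neg_pos.mpr (hroots i).2, ?_⟩
  apply map_injective (algebraMap ℝ ℂ) (algebraMap ℝ ℂ).injective
  have hsplit := C_leadingCoeff_mul_prod_multiset_X_sub_C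
    (IsAlgClosed.card_roots_eq_natDegree (p := Q))
  rw [leadingCoeff_map, hw, Multiset.map_map, ← prod_eq_multiset_prod] at hsplit
  refine hsplit.symm.trans ?_
  rw [Polynomial.map_mul, map_C, Polynomial.map_prod]
  refine congrArg _ (prod_congr rfl fun i _ => ?_)
  have hwi : w i = ((w i).re : ℂ) := Complex.ext rfl (by simp [(hroots i).1])
  rw [Function.comp_apply, hwi]
  simp [sub_eq_add_neg]

theorem le_coeff_one_of_roots_neg {P : ℝ[X]} (hP : ∀ z : ℂ, aeval z P = 0 → z.im = 0 ∧ z.re < 0)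
    (hlead : 0 < P.leadingCoeff) :
    P.natDegree * P.coeff 0 ^ (((P.natDegree : ℝ) - 1) / P.natDegree)
      * P.leadingCoeff ^ ((1 : ℝ) / P.natDegree) ≤ P.coeff 1 := by
  obtain ⟨d, g, hg, hPg⟩ := exists_eq_C_mul_prod_X_add_C hP
  set c := P.leadingCoeff
  have hdeg : P.natDegree = d := by
    rw [hPg, natDegree_C_mul hlead.ne', natDegree_prod_of_monic _ _ fun _ _ => monic_X_add_C _]
    simp
  have h0 : P.coeff 0 = c * ∏ i, g i := by
    rw [hPg, coeff_C_mul, coeff_zero_prod]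
    simp
  have h1 : P.coeff 1 = c * ∑ i, ∏ k ∈ univ.erase i, g k := by
    rw [hPg, coeff_C_mul, coeff_one_prod_X_add_C]
  have hamgm := card_mul_prod_rpow_le_sum_prod_erase hg
  rw [Fintype.card_fin] at hamgm
  rw [hdeg, h0, h1]
  rcases Nat.eq_zero_or_pos d with rfl | hd
  · simp
  rw [Real.mul_rpow hlead.le (prod_pos fun i _ => hg i).le]
  calc (d : ℝ) * (c ^ (((d : ℝ) - 1) / d) * (∏ i, g i) ^ (((d : ℝ) - 1) / d)) * c ^ ((1 : ℝ) / d)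
      = c ^ (((d : ℝ) - 1) / d + 1 / d) * (d * (∏ i, g i) ^ (((d : ℝ) - 1) / d)) := by
        rw [Real.rpow_add hlead]; ring
    _ = c * (d * (∏ i, g i) ^ (((d : ℝ) - 1) / d)) := by
        rw [← add_div, sub_add_cancel, div_self (by positivity), Real.rpow_one]
    _ ≤ _ := mul_le_mul_of_nonneg_left hamgm hlead.le

theorem coeff_zero_le_eval_of_coeff_nonneg {p : ℝ[X]} (hp : ∀ m, 0 ≤ p.coeff m) {t : ℝ}
    (ht : 0 ≤ t) : p.coeff 0 ≤ p.eval t := by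
  rw [eval_eq_sum_range]
  simpa using single_le_sum (f := fun m => p.coeff m * t ^ m)
    (fun m _ => mul_nonneg (hp m) (pow_nonneg ht m)) (mem_range.mpr p.natDegree.succ_pos)

section GardingCone

variable {n i j k : ℕ}

theorem esym_zero (x : Fin n → ℝ) : esym n 0 x = 1 := by
  simp [esym]

theorem esym_eq_zero_of_lt (h : n < j) (x : Fin n → ℝ) : esym n j x = 0 := by
  rw [esym, powersetCard_eq_empty.mpr (by simpa using h), sum_empty]

theorem esym_const (c : ℝ) : esym n j (fun _ => c) = n.choose j * c ^ j := by
  simp only [esym, prod_const]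
  rw [sum_congr rfl fun s hs => by rw [(mem_powersetCard.mp hs).2], sum_const, card_powersetCard,
    card_univ, Fintype.card_fin, nsmul_eq_mul]

theorem esym_smul (c : ℝ) (x : Fin n → ℝ) : esym n j (c • x) = c ^ j * esym n j x := by
  rw [esym, esym, mul_sum]
  refine sum_congr rfl fun s hs => ?_
  rw [(mem_powersetCard.mp hs).2.symm]
  simp [prod_mul_distrib]

theorem coeff_prod_X_add_C_eq_esym (x : Fin n → ℝ) {m : ℕ} (hm : m ≤ n) :
    (∏ k, (X + C (x k))).coeff m = esym n (n - m) x := by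
  rw [Finset.prod_X_add_C_coeff _ _ (by simpa using hm), card_univ, Fintype.card_fin, esym]

theorem esym_add_const (hi : i ≤ n) (x : Fin n → ℝ) (t : ℝ) :
    esym n i (fun k => x k + t) = (hasseDeriv (n - i) (∏ k, (X + C (x k)))).eval t := by
  rw [← taylor_coeff, taylor_apply, Polynomial.prod_comp]
  simp only [add_comp, X_comp, C_comp]
  rw [prod_congr rfl fun k _ => show X + C t + C (x k) = X + C (x k + t) by rw [C_add]; ring,
    coeff_prod_X_add_C_eq_esym _ (Nat.sub_le n i), Nat.sub_sub_self hi]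

theorem le_of_mem_gardingCone {x : Fin n → ℝ} (hx : x ∈ GardingCone n k) : k ≤ n := by
  by_contra! h
  have := hx k (by omega) le_rfl
  rw [esym_eq_zero_of_lt h] at this
  exact this.false

theorem gardingCone_anti (h : j ≤ k) : GardingCone n k ⊆ GardingCone n j :=
  fun _ hx i hi hij => hx i hi (hij.trans h)

theorem esym_pos_of_mem_gardingCone {x : Fin n → ℝ} (hx : x ∈ GardingCone n j) (hi : i ≤ j) :
    0 < esym n i x := by
  rcases Nat.eq_zero_or_pos i with rfl | hi0
  · simp [esym_zero]
  · exact hx i hi0 hi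

theorem smul_mem_gardingCone {x : Fin n → ℝ} (hx : x ∈ GardingCone n j) {c : ℝ} (hc : 0 < c) :
    c • x ∈ GardingCone n j := fun i hi hij => by
  rw [esym_smul]
  exact mul_pos (pow_pos hc i) (hx i hi hij)

theorem add_const_mem_gardingCone {x : Fin n → ℝ} (hx : x ∈ GardingCone n j) {t : ℝ}
    (ht : 0 ≤ t) : (fun k => x k + t) ∈ GardingCone n j := by
  intro i hi hij
  have hin : i ≤ n := hij.trans (le_of_mem_gardingCone hx)
  rw [esym_add_const hin]
  refine (hx i hi hij).trans_le ?_
  have hcoeff : ∀ m, (hasseDeriv (n - i) (∏ k, (X + C (x k)))).coeff m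
      = (m + (n - i)).choose (n - i) * if m ≤ i then esym n (i - m) x else 0 := by
    intro m
    rw [hasseDeriv_coeff]
    split_ifs with hm
    · rw [coeff_prod_X_add_C_eq_esym x (by omega), show n - (m + (n - i)) = i - m by omega]
    · rw [coeff_eq_zero_of_natDegree_lt, mul_zero]
      refine (natDegree_prod_le _ _).trans_lt ?_
      simpa using (show n < m + (n - i) by omega)
  have hnonneg : ∀ m, 0 ≤ (hasseDeriv (n - i) (∏ k, (X + C (x k)))).coeff m := by
    intro m
    rw [hcoeff]
    split_ifs
    · exact mul_nonneg (Nat.cast_nonneg _) (esym_pos_of_mem_gardingCone hx (by omega)).le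
    · simp
  calc esym n i x = (hasseDeriv (n - i) (∏ k, (X + C (x k)))).coeff 0 := by simp [hcoeff]
    _ ≤ _ := coeff_zero_le_eval_of_coeff_nonneg hnonneg ht

theorem const_add_mul_mem_gardingCone {x : Fin n → ℝ} (hx : x ∈ GardingCone n j) {a b : ℝ}
    (ha : 0 ≤ a) (hb : 0 ≤ b) (hab : 0 < a + b) : (fun k => a + b * x k) ∈ GardingCone n j := by
  rcases hb.eq_or_lt with rfl | hb
  · intro i hi hij
    simp only [zero_mul, add_zero, esym_const] at hab ⊢
    have := Nat.choose_pos (hij.trans (le_of_mem_gardingCone hx))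
    positivity
  · convert smul_mem_gardingCone (add_const_mem_gardingCone hx (div_nonneg ha hb.le)) hb using 1
    ext k
    simp [field]
    ring

theorem one_sub_add_mul_mem_gardingCone {x : Fin n → ℝ} (hx : x ∈ GardingCone n j) {θ : ℝ}
    (hθ : θ ∈ Set.Icc (0 : ℝ) 1) : (fun k => 1 - θ + θ * x k) ∈ GardingCone n j :=
  const_add_mul_mem_gardingCone hx (by linarith [hθ.2]) hθ.1 (by linarith)

end GardingCone

theorem Finset.sum_powersetCard_succ_sum_erase {ι M : Type*} [DecidableEq ι] [AddCommMonoid M]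
    (U : Finset ι) (m : ℕ) (f : ι → Finset ι → M) :
    ∑ S ∈ U.powersetCard (m + 1), ∑ i ∈ S, f i (S.erase i)
      = ∑ i ∈ U, ∑ A ∈ (U.erase i).powersetCard m, f i A := by
  rw [sum_comm' (t' := U) (s' := fun i => {S ∈ U.powersetCard (m + 1) | i ∈ S})]
  · refine sum_congr rfl fun i hi => sum_nbij' (·.erase i) (insert i) ?_ ?_ ?_ ?_ fun _ _ => rfl
    · intro S hS
      rw [mem_filter, mem_powersetCard] at hS
      simp [erase_subset_erase _ hS.1.1, card_erase_of_mem hS.2, hS.1.2]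
    · intro A hA
      simp only [mem_powersetCard, subset_erase] at hA
      simp [insert_subset hi hA.1.1, card_insert_of_notMem hA.1.2, hA.2]
    · intro S hS
      exact insert_erase (mem_filter.mp hS).2
    · intro A hA
      exact erase_insert (subset_erase.mp (mem_powersetCard.mp hA).1).2
  · intro S i
    simp only [mem_filter, mem_powersetCard]
    exact ⟨fun h => ⟨⟨h.1, h.2⟩, h.1.1 h.2⟩, fun h => h.1⟩

section EsymLine

variable {R : Type*} [CommRing R] {n j : ℕ}

noncomputable def esymLine (j : ℕ) (a b : Fin n → R) : R[X] :=
  ∑ s ∈ powersetCard j univ, ∏ i ∈ s, (C (a i) + C (b i) * X)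

theorem eval_esymLine (a b : Fin n → R) (t : R) :
    (esymLine j a b).eval t = ∑ s ∈ powersetCard j univ, ∏ i ∈ s, (a i + b i * t) := by
  simp [esymLine, eval_finsetSum, eval_prod]

theorem esymLine_map {S : Type*} [CommRing S] (f : R →+* S) (a b : Fin n → R) :
    (esymLine j a b).map f = esymLine j (f ∘ a) (f ∘ b) := by
  simp [esymLine, Polynomial.map_sum, Polynomial.map_prod]

theorem natDegree_C_add_C_mul_X_le (a b : R) : (C a + C b * X).natDegree ≤ 1 := by
  rw [add_comm]
  exact natDegree_linear_le

theorem natDegree_esymLine_le (a b : Fin n → R) : (esymLine j a b).natDegree ≤ j := by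
  refine natDegree_sum_le_of_forall_le _ _ fun s hs => (natDegree_prod_le _ _).trans ?_
  rw [← (mem_powersetCard.mp hs).2, card_eq_sum_ones]
  exact sum_le_sum fun i _ => natDegree_C_add_C_mul_X_le _ _

theorem coeff_esymLine_self (a b : Fin n → R) :
    (esymLine j a b).coeff j = ∑ s ∈ powersetCard j univ, ∏ i ∈ s, b i := by
  rw [esymLine, finsetSum_coeff]
  refine sum_congr rfl fun s hs => ?_
  have := coeff_prod_of_natDegree_le (s := s) (fun i => C (a i) + C (b i) * X) 1
    fun i _ => natDegree_C_add_C_mul_X_le _ _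
  rw [mul_one, (mem_powersetCard.mp hs).2] at this
  simp [this]

theorem coeff_zero_esymLine (a b : Fin n → R) :
    (esymLine j a b).coeff 0 = ∑ s ∈ powersetCard j univ, ∏ i ∈ s, a i := by
  simp [coeff_zero_eq_eval_zero, eval_esymLine]

theorem continuous_coeff_esymLine [TopologicalSpace R] [IsTopologicalRing R] {T : Type*}
    [TopologicalSpace T] {a b : T → Fin n → R} (ha : Continuous a) (hb : Continuous b) (m : ℕ) :
    Continuous fun θ => (esymLine j (a θ) (b θ)).coeff m := by
  simp only [esymLine, finsetSum_coeff]
  refine continuous_finsetSum _ fun s _ => continuous_coeff_prod s (fun i _ m => ?_) m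
  rcases m with _ | _ | m <;> simp <;> fun_prop

theorem coeff_one_esymLine (hj : 1 ≤ j) (a b : Fin n → ℝ) :
    (esymLine j a b).coeff 1 = ∑ i, b i * esymOmit n (j - 1) i a := by
  obtain ⟨j, rfl⟩ := Nat.exists_eq_add_of_le' hj
  have hderiv : (esymLine (j + 1) a b).coeff 1 = (derivative (esymLine (j + 1) a b)).eval 0 := by
    rw [← coeff_zero_eq_eval_zero, coeff_derivative]
    simp
  rw [hderiv, esymLine, derivative_sum, eval_finsetSum]
  simp only [derivative_prod_finset, eval_finsetSum, eval_mul, eval_prod, derivative_add,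
    derivative_C, derivative_mul, derivative_X, eval_add, eval_C, eval_X, zero_mul, zero_add,
    mul_one, mul_zero, add_zero]
  rw [sum_powersetCard_succ_sum_erase univ j fun i A => (∏ k ∈ A, a k) * b i]
  simp [esymOmit, mul_sum, mul_comm]

end EsymLine

section Hyperbolicity

open Complex ComplexConjugate

variable {n j : ℕ}

theorem aeval_esymLine (x y : Fin n → ℝ) (t : ℂ) :
    aeval t (esymLine j x y) = (esymLine j (fun k => (x k : ℂ)) fun k => (y k : ℂ)).eval t := by
  rw [← eval_map_algebraMap, esymLine_map]
  rfl

theorem coeff_esymLine_ofReal_ne_zero {a : Fin n → ℂ} {y : Fin n → ℝ}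
    (hy : y ∈ GardingCone n j) : (esymLine j a fun k => (y k : ℂ)).coeff j ≠ 0 := by
  rw [coeff_esymLine_self]
  exact_mod_cast (esym_pos_of_mem_gardingCone hy le_rfl).ne'

theorem eval_esymLine_ne_zero_of_forall_im_pos (hjn : j ≤ n) {a b : Fin n → ℂ} {t : ℂ}
    (h : ∀ k, 0 < (a k + b k * t).im) : (esymLine j a b).eval t ≠ 0 := by
  rw [eval_esymLine, ← esymm_map_val]
  exact esymm_ne_zero_of_forall_im_pos hjn h

theorem im_neg_of_isRoot_esymLine_add_I {x y : Fin n → ℝ} (hy : y ∈ GardingCone n j) {τ : ℝ}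
    (hτ : 0 < τ) {t : ℂ} (ht : (esymLine j (fun k => x k + τ * I) fun k => (y k : ℂ)).IsRoot t) :
    t.im < 0 := by
  have hjn := le_of_mem_gardingCone hy
  refine isPreconnected_Icc.neg_of_isRoot (d := j)
    (p := fun θ => esymLine j (fun k => x k + τ * I) fun k => ((1 - θ + θ * y k : ℝ) : ℂ))
    (continuous_coeff_esymLine continuous_const (by fun_prop)) (fun _ => natDegree_esymLine_le _ _)
    (fun θ hθ => coeff_esymLine_ofReal_ne_zero (one_sub_add_mul_mem_gardingCone hy hθ))
    continuous_im ?_ (Set.left_mem_Icc.mpr zero_le_one) (Set.right_mem_Icc.mpr zero_le_one) ?_ t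
    (by simpa using ht)
  · exact fun θ _ z hz him =>
      eval_esymLine_ne_zero_of_forall_im_pos hjn (fun k => by simpa [him] using hτ) hz
  · intro z hz
    by_contra! him
    exact eval_esymLine_ne_zero_of_forall_im_pos hjn
      (fun k => by simpa using add_pos_of_pos_of_nonneg hτ him) hz

theorem im_eq_zero_of_aeval_esymLine_eq_zero {x y : Fin n → ℝ} (hy : y ∈ GardingCone n j)
    {t : ℂ} (ht : aeval t (esymLine j x y) = 0) : t.im = 0 := by
  have him_nonpos : ∀ t : ℂ, aeval t (esymLine j x y) = 0 → t.im ≤ 0 := by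
    intro t ht
    by_contra! hpos
    -- a root in the upper half-plane at `τ = 0` survives for small `τ > 0`
    have hlim := eventually_exists_isRoot_mem (d := j) (θ₀ := 0)
      (p := fun τ : ℝ => esymLine j (fun k => x k + τ * I) fun k => (y k : ℂ))
      (continuous_coeff_esymLine (by fun_prop) continuous_const)
      (fun _ => natDegree_esymLine_le _ _) (coeff_esymLine_ofReal_ne_zero hy)
      (isOpen_lt continuous_const continuous_im) hpos (by simpa [IsRoot, aeval_esymLine] using ht)
    obtain ⟨τ, ⟨w, hw, hroot⟩, hτ⟩ :=
      ((hlim.filter_mono nhdsWithin_le_nhds).and self_mem_nhdsWithin).exists (f := 𝓝[>] 0)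
    exact (im_neg_of_isRoot_esymLine_add_I hy hτ hroot).not_gt hw
  have hconj := him_nonpos (conj t) (by rw [aeval_conj, ht, map_zero])
  rw [conj_im] at hconj
  linarith [him_nonpos t ht]

theorem esym_add_mul_re_eq_zero {x y : Fin n → ℝ} (hy : y ∈ GardingCone n j) {t : ℂ}
    (ht : aeval t (esymLine j x y) = 0) : esym n j (fun k => x k + y k * t.re) = 0 := by
  have ht_real : t = (t.re : ℂ) :=
    Complex.ext rfl (by simp [im_eq_zero_of_aeval_esymLine_eq_zero hy ht])
  rw [ht_real, ← coe_algebraMap, aeval_algebraMap_apply_eq_algebraMap_eval, eval_esymLine] at ht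
  exact (map_eq_zero_iff _ (algebraMap ℝ ℂ).injective).mp ht

theorem re_neg_of_aeval_esymLine_eq_zero {lam mu : Fin n → ℝ} (hlam : lam ∈ GardingCone n j)
    (hmu : mu ∈ GardingCone n j) {t : ℂ} (ht : aeval t (esymLine j lam mu) = 0) : t.re < 0 := by
  refine isPreconnected_Icc.neg_of_isRoot (d := j)
    (p := fun θ => esymLine j (fun k => ((1 - θ + θ * lam k : ℝ) : ℂ)) fun k => (mu k : ℂ))
    (continuous_coeff_esymLine (by fun_prop) continuous_const) (fun _ => natDegree_esymLine_le _ _)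
    (fun _ _ => coeff_esymLine_ofReal_ne_zero hmu) continuous_re ?_
    (Set.left_mem_Icc.mpr zero_le_one) (Set.right_mem_Icc.mpr zero_le_one) ?_ t
    (by simpa [IsRoot, aeval_esymLine] using ht)
  · intro θ hθ z hz hre
    have := esym_add_mul_re_eq_zero hmu ((aeval_esymLine _ _ z).trans hz)
    simp only [hre, mul_zero, add_zero] at this
    exact (esym_pos_of_mem_gardingCone (one_sub_add_mul_mem_gardingCone hlam hθ) le_rfl).ne' this
  · intro z hz
    by_contra! hre
    have := esym_add_mul_re_eq_zero hmu ((aeval_esymLine _ _ z).trans hz)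
    simp only [sub_zero, zero_mul, add_zero] at this
    have hpos := esym_pos_of_mem_gardingCone
      (const_add_mul_mem_gardingCone hmu zero_le_one hre (by linarith)) le_rfl
    simp only [mul_comm z.re] at hpos
    exact hpos.ne' this

end Hyperbolicity

theorem garding_inequality_general (n k j : ℕ) (hj : 1 ≤ j) (hjk : j ≤ k)
    (lam mu : Fin n → ℝ)
    (hlam : lam ∈ GardingCone n k) (hmu : mu ∈ GardingCone n k) :
    (∑ i, mu i * esymOmit n (j - 1) i lam)
      ≥ j * (esym n j lam) ^ (((j : ℝ) - 1) / j) * (esym n j mu) ^ ((1 : ℝ) / j) ∧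
    0 < (j : ℝ) * (esym n j lam) ^ (((j : ℝ) - 1) / j) * (esym n j mu) ^ ((1 : ℝ) / j) := by
  have hlam' := gardingCone_anti hjk hlam
  have hmu' := gardingCone_anti hjk hmu
  have hL : 0 < esym n j lam := hlam' j hj le_rfl
  have hM : 0 < esym n j mu := hmu' j hj le_rfl
  have hdeg : (esymLine j lam mu).natDegree = j := le_antisymm (natDegree_esymLine_le _ _)
    (le_natDegree_of_ne_zero (by rw [coeff_esymLine_self]; exact hM.ne'))
  have hlc : (esymLine j lam mu).leadingCoeff = esym n j mu := by
    rw [leadingCoeff, hdeg, coeff_esymLine_self]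
    rfl
  have key := le_coeff_one_of_roots_neg (fun z hz => ⟨im_eq_zero_of_aeval_esymLine_eq_zero hmu' hz,
    re_neg_of_aeval_esymLine_eq_zero hlam' hmu' hz⟩) (hlc ▸ hM)
  rw [hdeg, hlc, coeff_zero_esymLine, coeff_one_esymLine hj] at key
  exact ⟨key, by positivity⟩

theorem garding_inequality (n k j : ℕ) (hj : 1 ≤ j) (hjk : j ≤ k) (hkn : k ≤ n)
    (lam mu : Fin n → ℝ)
    (hlam : lam ∈ GardingCone n k) (hmu : mu ∈ GardingCone n k) :
    (∑ i, mu i * esymOmit n (j - 1) i lam)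
      ≥ j * (esym n j lam) ^ (((j : ℝ) - 1) / j) * (esym n j mu) ^ ((1 : ℝ) / j) ∧
    0 < (j : ℝ) * (esym n j lam) ^ (((j : ℝ) - 1) / j) * (esym n j mu) ^ ((1 : ℝ) / j) :=
  garding_inequality_general n k j hj hjk lam mu hlam hmu
end
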